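/- arXiv:1912.02765 — 3 statements merged into one kernel-verified Lean document; each statement's English description precedes it below -/
import Mathlib

section
/- Let f and f̂ be probability densities represented by two tree-structured SPNs over an n-dimensional product domain that have the same structure, with k mixing weights in total. Let ε, α ∈ [0,1], and suppose that every pair of corresponding leaves fᵢ, f̂ᵢ satisfies TV(fᵢ, f̂ᵢ) ≤ ε and that every pair of corresponding mixing weights satisfies |ŵⱼ − wⱼ| ≤ α. Then TV(f, f̂) ≤ nε + kα/2. -/
open MeasureTheory

inductive SPN (n : ℕ) (X : Type) : Type where
  | leaf (d : ℕ) (emb : Fin d ↪ Fin n) (g : (Fin d → X) → ℝ)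
  | prod (m : ℕ) (children : Fin m → SPN n X)
  | sum (m : ℕ) (w : Fin m → ℝ) (children : Fin m → SPN n X)

namespace SPN

variable {n : ℕ} {X : Type}

def scope : SPN n X → Finset (Fin n)
  | .leaf _ emb _ => Finset.univ.map emb
  | .prod _ c => Finset.univ.biUnion fun i => (c i).scope
  | .sum _ _ c => Finset.univ.biUnion fun i => (c i).scope

noncomputable def density : SPN n X → (Fin n → X) → ℝ
  | .leaf _ emb g => fun x => g fun j => x (emb j)
  | .prod _ c => fun x => ∏ i, (c i).density x
  | .sum _ w c => fun x => ∑ i, w i * (c i).density x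

def numLeaves : SPN n X → ℕ
  | .leaf _ _ _ => 1
  | .prod _ c => ∑ i, (c i).numLeaves
  | .sum _ _ c => ∑ i, (c i).numLeaves

def numWeights : SPN n X → ℕ
  | .leaf _ _ _ => 0
  | .prod _ c => ∑ i, (c i).numWeights
  | .sum m _ c => m + ∑ i, (c i).numWeights

def LeafT (n : ℕ) (X : Type) : Type := Σ d : ℕ, (Fin d ↪ Fin n) × ((Fin d → X) → ℝ)

instance : Inhabited (LeafT n X) := ⟨⟨0, Function.Embedding.ofIsEmpty, fun _ => 0⟩⟩

def leaves : SPN n X → List (LeafT n X)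
  | .leaf d emb g => [⟨d, emb, g⟩]
  | .prod _ c => (List.ofFn fun i => (c i).leaves).flatten
  | .sum _ _ c => (List.ofFn fun i => (c i).leaves).flatten

noncomputable def pathWeights : SPN n X → List ℝ
  | .leaf _ _ _ => [1]
  | .prod _ c => (List.ofFn fun i => (c i).pathWeights).flatten
  | .sum _ w c => (List.ofFn fun i => ((c i).pathWeights).map fun r => w i * r).flatten

def weightsList : SPN n X → List ℝ
  | .leaf _ _ _ => []
  | .prod _ c => (List.ofFn fun i => (c i).weightsList).flatten
  | .sum _ w c => (List.ofFn fun i => w i) ++ (List.ofFn fun i => (c i).weightsList).flatten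

variable [MeasurableSpace X]

def WF (ν : Measure X) [SigmaFinite ν] : SPN n X → Prop
  | .leaf d _ g => (∀ y, 0 ≤ g y) ∧ Measurable g ∧
      ∫ y, g y ∂(Measure.pi fun _ : Fin d => ν) = 1
  | .prod m c => 0 < m ∧ (∀ i, (c i).WF ν) ∧
      ∀ i j, i ≠ j → Disjoint ((c i).scope) ((c j).scope)
  | .sum m w c => 0 < m ∧ (∀ i, (c i).WF ν) ∧ (∀ i j, (c i).scope = (c j).scope) ∧
      (∀ i, 0 ≤ w i) ∧ ∑ i, w i = 1

inductive SameStruct : SPN n X → SPN n X → Prop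
  | leaf (d : ℕ) (emb : Fin d ↪ Fin n) (g g' : (Fin d → X) → ℝ) :
      SameStruct (.leaf d emb g) (.leaf d emb g')
  | prod (m : ℕ) (c c' : Fin m → SPN n X) (h : ∀ i, SameStruct (c i) (c' i)) :
      SameStruct (.prod m c) (.prod m c')
  | sum (m : ℕ) (w w' : Fin m → ℝ) (c c' : Fin m → SPN n X)
      (h : ∀ i, SameStruct (c i) (c' i)) :
      SameStruct (.sum m w c) (.sum m w' c')

noncomputable def leafTV (ν : Measure X) [SigmaFinite ν] (L L' : LeafT n X) : ℝ :=
  if h : L'.1 = L.1 then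
    (1/2) * ∫ y, |L.2.2 y - L'.2.2 fun j => y (Fin.cast h j)|
      ∂(Measure.pi fun _ : Fin L.1 => ν)
  else 1

noncomputable def tv (ν : Measure X) [SigmaFinite ν] (f g : (Fin n → X) → ℝ) : ℝ :=
  (1/2) * ∫ x, |f x - g x| ∂(Measure.pi fun _ : Fin n => ν)

end SPN

/-
Every node of an SPN represents a probability density in the coordinates of its scope, so one can
bound by induction on the tree the L¹ distance between corresponding nodes, integrated over the
scope only, by `2 ε |scope| + α · (number of weights below the node)`. At a leaf this is the TV
hypothesis (a leaf with empty scope is the constant `1` on both sides). At a product node,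
`|a P - b Q| ≤ |a - b| P + b |P - Q|` telescopes `∏ fᵢ - ∏ gᵢ`; the marginal integral of each term
factorises over the disjoint child scopes, all factors but one integrate to `1`, and the scope
sizes add up. At a sum node, `|∑ wᵢ fᵢ - ∑ w'ᵢ gᵢ| ≤ ∑ (wᵢ |fᵢ - gᵢ| + |wᵢ - w'ᵢ| gᵢ)` gives a
convex combination of the children's bounds plus `α` per weight of the node. At the root the scope
is `{1, …, n}`, so `‖f - f̂‖₁ ≤ 2 n ε + k α`.
-/

open scoped ENNReal

lemma ENNReal.ofReal_abs_mul_sub_mul_le {a b P Q : ℝ} (hb : 0 ≤ b) (hP : 0 ≤ P) :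
    ENNReal.ofReal |a * P - b * Q|
      ≤ ENNReal.ofReal |a - b| * ENNReal.ofReal P + ENNReal.ofReal b * ENNReal.ofReal |P - Q| := by
  rw [← ENNReal.ofReal_mul (abs_nonneg _), ← ENNReal.ofReal_mul hb,
    ← ENNReal.ofReal_add (by positivity) (by positivity)]
  refine ENNReal.ofReal_le_ofReal ?_
  calc |a * P - b * Q| = |(a - b) * P + b * (P - Q)| := by ring_nf
    _ ≤ |(a - b) * P| + |b * (P - Q)| := abs_add_le _ _
    _ = |a - b| * P + b * |P - Q| := by
      rw [abs_mul, abs_mul, abs_of_nonneg hP, abs_of_nonneg hb]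

lemma ENNReal.ofReal_abs_sum_mul_sub_sum_mul_le {κ : Type*} (I : Finset κ) {w w' a b : κ → ℝ}
    (hw : ∀ k ∈ I, 0 ≤ w k) (hb : ∀ k ∈ I, 0 ≤ b k) :
    ENNReal.ofReal |∑ k ∈ I, w k * a k - ∑ k ∈ I, w' k * b k|
      ≤ ∑ k ∈ I, (ENNReal.ofReal (w k) * ENNReal.ofReal |a k - b k|
        + ENNReal.ofReal |w k - w' k| * ENNReal.ofReal (b k)) := by
  have hterm : ∀ k ∈ I, |w k * a k - w' k * b k| ≤ w k * |a k - b k| + |w k - w' k| * b k :=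
    fun k hk => calc
      |w k * a k - w' k * b k| = |w k * (a k - b k) + (w k - w' k) * b k| := by ring_nf
      _ ≤ |w k * (a k - b k)| + |(w k - w' k) * b k| := abs_add_le _ _
      _ = w k * |a k - b k| + |w k - w' k| * b k := by
        rw [abs_mul, abs_mul, abs_of_nonneg (hw k hk), abs_of_nonneg (hb k hk)]
  rw [← Finset.sum_sub_distrib]
  refine (ENNReal.ofReal_le_ofReal ((Finset.abs_sum_le_sum_abs _ _).trans
    (Finset.sum_le_sum hterm))).trans_eq ?_
  rw [ENNReal.ofReal_sum_of_nonneg fun k hk => by positivity [hw k hk, hb k hk]]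
  refine Finset.sum_congr rfl fun k hk => ?_
  rw [ENNReal.ofReal_add (by positivity [hw k hk]) (by positivity [hb k hk]),
    ENNReal.ofReal_mul (hw k hk), ENNReal.ofReal_mul (abs_nonneg _)]

lemma List.forall_mem_zip_of_forall_getElem! {α β : Type*} [Inhabited α] [Inhabited β]
    {l : List α} {l' : List β} {P : α → β → Prop}
    (h : ∀ i, i < l.length → P l[i]! l'[i]!) : ∀ p ∈ l.zip l', P p.1 p.2 := by
  intro p hp
  obtain ⟨i, hi, rfl⟩ := List.mem_iff_getElem.mp hp
  rw [List.length_zip] at hi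
  have h₁ : i < l.length := lt_of_lt_of_le hi (min_le_left _ _)
  have h₂ : i < l'.length := lt_of_lt_of_le hi (min_le_right _ _)
  simpa [List.getElem_zip, getElem!_pos l i h₁, getElem!_pos l' i h₂] using h i h₁

lemma List.zip_flatten_ofFn {α β : Type*} {m : ℕ} (A : Fin m → List α) (B : Fin m → List β)
    (h : ∀ i, (A i).length = (B i).length) :
    (List.ofFn A).flatten.zip (List.ofFn B).flatten
      = (List.ofFn fun i => (A i).zip (B i)).flatten := by
  induction m with
  | zero => simp
  | succ m ih =>
    simp only [List.ofFn_succ, List.flatten_cons]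
    rw [List.zip_append (h 0), ih _ _ fun i => h i.succ]

lemma List.mem_zip_flatten_ofFn {α β : Type*} {m : ℕ} {A : Fin m → List α}
    {B : Fin m → List β} (h : ∀ i, (A i).length = (B i).length) {i : Fin m} {p : α × β}
    (hp : p ∈ (A i).zip (B i)) : p ∈ (List.ofFn A).flatten.zip (List.ofFn B).flatten := by
  rw [List.zip_flatten_ofFn A B h]
  exact List.mem_flatten.mpr ⟨_, List.mem_ofFn.mpr ⟨i, rfl⟩, hp⟩

lemma List.mem_zip_ofFn {α β : Type*} {m : ℕ} (f : Fin m → α) (g : Fin m → β) (i : Fin m) :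
    (f i, g i) ∈ (List.ofFn f).zip (List.ofFn g) :=
  List.mem_iff_getElem.mpr ⟨i, by simp, by simp⟩

section DependsOn

variable {ι : Type*} {α : ι → Type*} {β γ : Type*} {s : Set ι}

lemma DependsOn.comp_left {f : (∀ i, α i) → β} (hf : DependsOn f s) (g : β → γ) :
    DependsOn (g ∘ f) s :=
  fun _ _ h => congrArg g (hf h)

lemma DependsOn.comp₂ {β' : Type*} {f : (∀ i, α i) → β} {f' : (∀ i, α i) → β'}
    (hf : DependsOn f s) (hf' : DependsOn f' s) (g : β → β' → γ) :
    DependsOn (fun x => g (f x) (f' x)) s :=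
  fun _ _ h => by simp only [hf h, hf' h]

lemma dependsOn_finset_prod {κ : Type*} [CommMonoid β] [DecidableEq ι] {I : Finset κ}
    {t : κ → Finset ι} {f : κ → (∀ i, α i) → β} (hf : ∀ k ∈ I, DependsOn (f k) (t k)) :
    DependsOn (fun x => ∏ k ∈ I, f k x) (I.biUnion t) :=
  fun _ _ h => Finset.prod_congr rfl fun k hk =>
    hf k hk fun i hi => h i (Finset.mem_biUnion.mpr ⟨k, hk, hi⟩)

lemma DependsOn.apply_updateFinset_of_disjoint [DecidableEq ι] {f : (∀ i, α i) → β}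
    {s t : Finset ι} (hf : DependsOn f s) (hst : Disjoint s t) (x : ∀ i, α i) (y : ∀ i : t, α i) :
    f (Function.updateFinset x t y) = f x :=
  hf fun i hi => by simp [Function.updateFinset, Finset.disjoint_left.mp hst hi]

lemma DependsOn.apply_updateFinset_congr [DecidableEq ι] {f : (∀ i, α i) → β} {s : Finset ι}
    (hf : DependsOn f s) (x x' : ∀ i, α i) (y : ∀ i : s, α i) :
    f (Function.updateFinset x s y) = f (Function.updateFinset x' s y) :=
  hf fun i hi => by simp [Function.updateFinset, Finset.mem_coe.mp hi]

end DependsOn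

namespace MeasureTheory

lemma eq_one_of_integral_pi_eq_one_of_isEmpty {ι : Type*} [Fintype ι] [IsEmpty ι]
    {Y : ι → Type*} [∀ i, MeasurableSpace (Y i)] {μ : ∀ i, Measure (Y i)}
    {g : (∀ i, Y i) → ℝ} (h : ∫ y, g y ∂Measure.pi μ = 1) (y : ∀ i, Y i) : g y = 1 := by
  rw [integral_unique, Measure.pi_of_empty] at h
  simpa [Subsingleton.elim y default] using h

section LMarginal

variable {δ : Type*} [DecidableEq δ] {X : δ → Type*} [∀ i, MeasurableSpace (X i)]
  (μ : ∀ i, Measure (X i)) {s t : Finset δ}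

lemma lmarginal_add {f g : (∀ i, X i) → ℝ≥0∞} (hf : Measurable f) (x : ∀ i, X i) :
    (∫⋯∫⁻_s, (fun x => f x + g x) ∂μ) x = (∫⋯∫⁻_s, f ∂μ) x + (∫⋯∫⁻_s, g ∂μ) x :=
  lintegral_add_left (hf.comp measurable_updateFinset) _

lemma lmarginal_const_mul (c : ℝ≥0∞) {f : (∀ i, X i) → ℝ≥0∞} (hf : Measurable f)
    (x : ∀ i, X i) : (∫⋯∫⁻_s, (fun x => c * f x) ∂μ) x = c * (∫⋯∫⁻_s, f ∂μ) x :=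
  lintegral_const_mul c (hf.comp measurable_updateFinset)

lemma lmarginal_finset_sum {κ : Type*} (I : Finset κ) {f : κ → (∀ i, X i) → ℝ≥0∞}
    (hf : ∀ k ∈ I, Measurable (f k)) (x : ∀ i, X i) :
    (∫⋯∫⁻_s, (fun x => ∑ k ∈ I, f k x) ∂μ) x = ∑ k ∈ I, (∫⋯∫⁻_s, f k ∂μ) x :=
  lintegral_finsetSum _ fun k hk => (hf k hk).comp measurable_updateFinset

lemma lmarginal_eq_of_dependsOn {f : (∀ i, X i) → ℝ≥0∞} (hf : DependsOn f s)
    (x x' : ∀ i, X i) : (∫⋯∫⁻_s, f ∂μ) x = (∫⋯∫⁻_s, f ∂μ) x' :=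
  lintegral_congr fun y => hf.apply_updateFinset_congr x x' y

lemma lmarginal_mul_left_of_dependsOn {f g : (∀ i, X i) → ℝ≥0∞}
    (hf : DependsOn f s) (hst : Disjoint s t) (hg : Measurable g) :
    ∫⋯∫⁻_t, (fun x => f x * g x) ∂μ = fun x => f x * (∫⋯∫⁻_t, g ∂μ) x := by
  ext x
  simp only [lmarginal, hf.apply_updateFinset_of_disjoint hst]
  exact lintegral_const_mul _ (hg.comp measurable_updateFinset)

variable [∀ i, SigmaFinite (μ i)]

lemma lmarginal_union_mul_of_dependsOn {f g : (∀ i, X i) → ℝ≥0∞}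
    (hst : Disjoint s t) (hf : Measurable f) (hg : Measurable g)
    (hfs : DependsOn f s) (hgt : DependsOn g t) (x : ∀ i, X i) :
    (∫⋯∫⁻_s ∪ t, (fun x => f x * g x) ∂μ) x = (∫⋯∫⁻_s, f ∂μ) x * (∫⋯∫⁻_t, g ∂μ) x := by
  have hconst : (fun z => f z * (∫⋯∫⁻_t, g ∂μ) z) = fun z => f z * (∫⋯∫⁻_t, g ∂μ) x :=
    funext fun z => by rw [lmarginal_eq_of_dependsOn μ hgt z x]
  rw [lmarginal_union μ (fun x => f x * g x) (hf.mul hg) hst,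
    lmarginal_mul_left_of_dependsOn μ hfs hst hg, hconst]
  exact lintegral_mul_const _ (hf.comp measurable_updateFinset)

lemma lmarginal_biUnion_prod_of_dependsOn {κ : Type*} (I : Finset κ) {s : κ → Finset δ}
    (hs : (I : Set κ).PairwiseDisjoint s) {f : κ → (∀ i, X i) → ℝ≥0∞}
    (hf : ∀ k ∈ I, Measurable (f k)) (hfs : ∀ k ∈ I, DependsOn (f k) (s k)) (x : ∀ i, X i) :
    (∫⋯∫⁻_I.biUnion s, (fun x => ∏ k ∈ I, f k x) ∂μ) x = ∏ k ∈ I, (∫⋯∫⁻_s k, f k ∂μ) x := by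
  classical
  induction I using Finset.induction_on with
  | empty => simp
  | insert a I ha ih =>
    simp only [Finset.forall_mem_insert, Finset.coe_insert, Set.pairwiseDisjoint_insert] at *
    have hdisj : Disjoint (s a) (I.biUnion s) :=
      (Finset.disjoint_biUnion_right _ _ _).mpr fun k hk =>
        hs.2 k hk (ne_of_mem_of_not_mem hk ha).symm
    simp only [Finset.biUnion_insert, Finset.prod_insert ha]
    rw [lmarginal_union_mul_of_dependsOn μ hdisj hf.1 (Finset.measurable_prod _ hf.2) hfs.1
      (dependsOn_finset_prod hfs.2), ih hs.1 hf.2 hfs.2]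

variable {μ}

lemma lmarginal_map_comp_eq_lintegral {κ : Type*} [Fintype κ] (e : κ ↪ δ)
    {f : (∀ k, X (e k)) → ℝ≥0∞} (hf : Measurable f) (x : ∀ i, X i) :
    (∫⋯∫⁻_Finset.univ.map e, f ∘ (· ∘' e) ∂μ) x = ∫⁻ y, f y ∂Measure.pi (μ ∘' e) := by
  classical
  rw [Finset.map_eq_image, lmarginal_image e.injective _ hf, lmarginal_univ]

lemma lintegral_le_of_forall_lmarginal_univ_le [Fintype δ] {f : (∀ i, X i) → ℝ≥0∞} {c : ℝ≥0∞}
    (h : ∀ x, (∫⋯∫⁻_Finset.univ, f ∂μ) x ≤ c) :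
    ∫⁻ x, f x ∂Measure.pi μ ≤ c := by
  rcases isEmpty_or_nonempty (∀ i, X i) with hX | ⟨⟨x⟩⟩
  · simp
  · exact (lintegral_eq_lmarginal_univ x).trans_le (h x)

end LMarginal

section IsDensityOn

variable {δ : Type*} [DecidableEq δ] {X : δ → Type*} [∀ i, MeasurableSpace (X i)]
  {μ : ∀ i, Measure (X i)} {s : Finset δ}

structure IsDensityOn (μ : ∀ i, Measure (X i)) (s : Finset δ) (F : (∀ i, X i) → ℝ) :
    Prop where
  nonneg : ∀ x, 0 ≤ F x
  measurable : Measurable F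
  dependsOn : DependsOn F s
  lmarginal_eq_one : ∀ x, (∫⋯∫⁻_s, (fun x => ENNReal.ofReal (F x)) ∂μ) x = 1

lemma IsDensityOn.measurable_ofReal {F : (∀ i, X i) → ℝ} (hF : IsDensityOn μ s F) :
    Measurable fun x => ENNReal.ofReal (F x) :=
  hF.measurable.ennreal_ofReal

lemma IsDensityOn.measurable_ofReal_abs_sub {s' : Finset δ} {F G : (∀ i, X i) → ℝ}
    (hF : IsDensityOn μ s F) (hG : IsDensityOn μ s' G) :
    Measurable fun x => ENNReal.ofReal |F x - G x| :=
  (hF.measurable.sub hG.measurable).abs.ennreal_ofReal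

lemma IsDensityOn.finset_sum {κ : Type*} {I : Finset κ} {w : κ → ℝ} {F : κ → (∀ i, X i) → ℝ}
    (hw0 : ∀ k ∈ I, 0 ≤ w k) (hw1 : ∑ k ∈ I, w k = 1) (hF : ∀ k ∈ I, IsDensityOn μ s (F k)) :
    IsDensityOn μ s (fun x => ∑ k ∈ I, w k * F k x) where
  nonneg x := Finset.sum_nonneg fun k hk => mul_nonneg (hw0 k hk) ((hF k hk).nonneg x)
  measurable := Finset.measurable_sum _ fun k hk => measurable_const.mul (hF k hk).measurable
  dependsOn := fun x y h => Finset.sum_congr rfl fun k hk => by rw [(hF k hk).dependsOn h]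
  lmarginal_eq_one x := by
    have hsplit : (fun x => ENNReal.ofReal (∑ k ∈ I, w k * F k x))
        = fun x => ∑ k ∈ I, ENNReal.ofReal (w k) * ENNReal.ofReal (F k x) := by
      ext x
      rw [ENNReal.ofReal_sum_of_nonneg fun k hk => mul_nonneg (hw0 k hk) ((hF k hk).nonneg x)]
      exact Finset.sum_congr rfl fun k hk => ENNReal.ofReal_mul (hw0 k hk)
    rw [hsplit, lmarginal_finset_sum μ I (f := fun k x => ENNReal.ofReal (w k) * _)
      (fun k hk => measurable_const.mul (hF k hk).measurable_ofReal)]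
    calc ∑ k ∈ I, (∫⋯∫⁻_s, (fun x => ENNReal.ofReal (w k) * ENNReal.ofReal (F k x)) ∂μ) x
        = ∑ k ∈ I, ENNReal.ofReal (w k) := Finset.sum_congr rfl fun k hk => by
          rw [lmarginal_const_mul μ _ (hF k hk).measurable_ofReal, (hF k hk).lmarginal_eq_one,
            mul_one]
      _ = 1 := by rw [← ENNReal.ofReal_sum_of_nonneg hw0, hw1, ENNReal.ofReal_one]

lemma IsDensityOn.lmarginal_abs_sum_sub_sum_le {κ : Type*} (I : Finset κ) {w w' : κ → ℝ}
    {F G : κ → (∀ i, X i) → ℝ} (hw : ∀ k ∈ I, 0 ≤ w k)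
    (hF : ∀ k ∈ I, IsDensityOn μ s (F k)) (hG : ∀ k ∈ I, IsDensityOn μ s (G k))
    (x : ∀ i, X i) :
    (∫⋯∫⁻_s, (fun x => ENNReal.ofReal |∑ k ∈ I, w k * F k x - ∑ k ∈ I, w' k * G k x|) ∂μ) x
      ≤ ∑ k ∈ I, (ENNReal.ofReal (w k)
          * (∫⋯∫⁻_s, (fun x => ENNReal.ofReal |F k x - G k x|) ∂μ) x
        + ENNReal.ofReal |w k - w' k|) := by
  refine (lmarginal_mono (fun x => ENNReal.ofReal_abs_sum_mul_sub_sum_mul_le I hw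
    fun k hk => (hG k hk).nonneg x) x).trans_eq ?_
  rw [lmarginal_finset_sum μ I
    (f := fun k x => ENNReal.ofReal (w k) * ENNReal.ofReal |F k x - G k x|
      + ENNReal.ofReal |w k - w' k| * ENNReal.ofReal (G k x))
    (fun k hk => (((hF k hk).measurable_ofReal_abs_sub (hG k hk)).const_mul _).add
      ((hG k hk).measurable_ofReal.const_mul _))]
  refine Finset.sum_congr rfl fun k hk => ?_
  rw [lmarginal_add μ (((hF k hk).measurable_ofReal_abs_sub (hG k hk)).const_mul _),
    lmarginal_const_mul μ _ ((hF k hk).measurable_ofReal_abs_sub (hG k hk)),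
    lmarginal_const_mul μ _ (hG k hk).measurable_ofReal, (hG k hk).lmarginal_eq_one, mul_one]

variable [∀ i, SigmaFinite (μ i)]

lemma IsDensityOn.finset_prod {κ : Type*} {I : Finset κ} {t : κ → Finset δ}
    (ht : (I : Set κ).PairwiseDisjoint t) {F : κ → (∀ i, X i) → ℝ}
    (hF : ∀ k ∈ I, IsDensityOn μ (t k) (F k)) :
    IsDensityOn μ (I.biUnion t) (fun x => ∏ k ∈ I, F k x) where
  nonneg x := Finset.prod_nonneg fun k hk => (hF k hk).nonneg x
  measurable := Finset.measurable_prod _ fun k hk => (hF k hk).measurable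
  dependsOn := dependsOn_finset_prod fun k hk => (hF k hk).dependsOn
  lmarginal_eq_one x := by
    simp only [ENNReal.ofReal_prod_of_nonneg fun k hk => (hF k hk).nonneg _]
    rw [lmarginal_biUnion_prod_of_dependsOn μ I ht (fun k hk => (hF k hk).measurable_ofReal)
      (fun k hk => (hF k hk).dependsOn.comp_left ENNReal.ofReal)]
    exact Finset.prod_eq_one fun k hk => (hF k hk).lmarginal_eq_one x

lemma IsDensityOn.lmarginal_abs_prod_sub_prod_le {κ : Type*} (I : Finset κ) {t : κ → Finset δ}
    (ht : (I : Set κ).PairwiseDisjoint t) {F G : κ → (∀ i, X i) → ℝ}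
    (hF : ∀ k ∈ I, IsDensityOn μ (t k) (F k)) (hG : ∀ k ∈ I, IsDensityOn μ (t k) (G k))
    (x : ∀ i, X i) :
    (∫⋯∫⁻_I.biUnion t, (fun x => ENNReal.ofReal |∏ k ∈ I, F k x - ∏ k ∈ I, G k x|) ∂μ) x
      ≤ ∑ k ∈ I, (∫⋯∫⁻_t k, (fun x => ENNReal.ofReal |F k x - G k x|) ∂μ) x := by
  classical
  induction I using Finset.induction_on generalizing x with
  | empty => simp
  | insert a I ha ih =>
    simp only [Finset.forall_mem_insert, Finset.coe_insert, Set.pairwiseDisjoint_insert] at *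
    have hdisj : Disjoint (t a) (I.biUnion t) :=
      (Finset.disjoint_biUnion_right _ _ _).mpr fun k hk =>
        ht.2 k hk (ne_of_mem_of_not_mem hk ha).symm
    have hP := IsDensityOn.finset_prod ht.1 hF.2
    have hQ := IsDensityOn.finset_prod ht.1 hG.2
    set P := fun x => ∏ k ∈ I, F k x
    set Q := fun x => ∏ k ∈ I, G k x
    simp only [Finset.biUnion_insert, Finset.prod_insert ha, Finset.sum_insert ha]
    calc _ ≤ (∫⋯∫⁻_t a ∪ I.biUnion t, (fun x =>
            ENNReal.ofReal |F a x - G a x| * ENNReal.ofReal (P x)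
              + ENNReal.ofReal (G a x) * ENNReal.ofReal |P x - Q x|) ∂μ) x :=
          lmarginal_mono
            (fun x => ENNReal.ofReal_abs_mul_sub_mul_le (hG.1.nonneg x) (hP.nonneg x)) x
      _ = (∫⋯∫⁻_t a, (fun x => ENNReal.ofReal |F a x - G a x|) ∂μ) x
              * (∫⋯∫⁻_I.biUnion t, (fun x => ENNReal.ofReal (P x)) ∂μ) x
            + (∫⋯∫⁻_t a, (fun x => ENNReal.ofReal (G a x)) ∂μ) x
              * (∫⋯∫⁻_I.biUnion t, (fun x => ENNReal.ofReal |P x - Q x|) ∂μ) x := by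
        rw [lmarginal_add μ
            (f := fun x => ENNReal.ofReal |F a x - G a x| * ENNReal.ofReal (P x))
            ((hF.1.measurable_ofReal_abs_sub hG.1).mul hP.measurable_ofReal),
          lmarginal_union_mul_of_dependsOn μ hdisj
            (hF.1.measurable_ofReal_abs_sub hG.1) hP.measurable_ofReal
            (hF.1.dependsOn.comp₂ hG.1.dependsOn fun a b => ENNReal.ofReal |a - b|)
            (hP.dependsOn.comp_left ENNReal.ofReal),
          lmarginal_union_mul_of_dependsOn μ hdisj hG.1.measurable_ofReal
            (hP.measurable_ofReal_abs_sub hQ)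
            (hG.1.dependsOn.comp_left ENNReal.ofReal)
            (hP.dependsOn.comp₂ hQ.dependsOn fun a b => ENNReal.ofReal |a - b|)]
      _ ≤ _ := by
        rw [hP.lmarginal_eq_one, hG.1.lmarginal_eq_one, mul_one, one_mul]
        gcongr
        exact ih ht.1 hF.2 hG.2 x

end IsDensityOn

end MeasureTheory

namespace SPN

variable {n : ℕ} {X : Type}

lemma scope_subset_of_sum {m : ℕ} (w : Fin m → ℝ) (c : Fin m → SPN n X) (i : Fin m) :
    (c i).scope ⊆ (sum m w c).scope :=
  Finset.subset_biUnion_of_mem (fun i => (c i).scope) (Finset.mem_univ i)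

lemma dependsOn_density (t : SPN n X) : DependsOn t.density t.scope := by
  induction t with
  | leaf d emb g => exact fun x y h => congrArg g (funext fun j => h _ (by simp [scope]))
  | prod m c ih => exact dependsOn_finset_prod fun i _ => ih i
  | sum m w c ih =>
    exact fun x y h => Finset.sum_congr rfl fun i _ => by
      rw [(ih i).mono (Finset.coe_subset.mpr (scope_subset_of_sum w c i)) h]

lemma SameStruct.scope_eq {t t' : SPN n X} (h : SameStruct t t') : t'.scope = t.scope := by
  induction h with
  | leaf => rfl
  | prod m c c' _ ih | sum m w w' c c' _ ih =>
    exact Finset.biUnion_congr rfl fun i _ => ih i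

lemma SameStruct.length_leaves {t t' : SPN n X} (h : SameStruct t t') :
    t'.leaves.length = t.leaves.length := by
  induction h with
  | leaf => rfl
  | prod m c c' _ ih | sum m w w' c c' _ ih =>
    simp only [leaves, List.length_flatten, List.map_ofFn, List.sum_ofFn, Function.comp_def, ih]

lemma SameStruct.length_weightsList {t t' : SPN n X} (h : SameStruct t t') :
    t'.weightsList.length = t.weightsList.length := by
  induction h with
  | leaf => rfl
  | prod m c c' _ ih | sum m w w' c c' _ ih =>
    simp only [weightsList, List.length_append, List.length_ofFn, List.length_flatten,
      List.map_ofFn, List.sum_ofFn, Function.comp_def, ih]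

variable [MeasurableSpace X] {ν : Measure X} [SigmaFinite ν]

lemma WF.scope_eq_of_sum {m : ℕ} {w : Fin m → ℝ} {c : Fin m → SPN n X}
    (ht : (sum m w c).WF ν) (i : Fin m) : (c i).scope = (sum m w c).scope := by
  refine (scope_subset_of_sum w c i).antisymm fun x hx => ?_
  obtain ⟨j, -, hj⟩ := Finset.mem_biUnion.mp hx
  rwa [ht.2.2.1 i j]

lemma WF.isDensityOn {t : SPN n X} (ht : t.WF ν) :
    IsDensityOn (fun _ => ν) t.scope t.density := by
  induction t with
  | leaf d emb g =>
    obtain ⟨hg0, hgm, hg1⟩ := ht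
    refine ⟨fun _ => hg0 _, hgm.comp (measurable_pi_lambda _ fun j => measurable_pi_apply _),
      dependsOn_density _, fun x => ?_⟩
    refine (lmarginal_map_comp_eq_lintegral (μ := fun _ => ν) (f := fun y => ENNReal.ofReal (g y))
      emb hgm.ennreal_ofReal x).trans ?_
    rw [← ofReal_integral_eq_lintegral_ofReal (Integrable.of_integral_ne_zero (hg1 ▸ one_ne_zero))
      (ae_of_all _ hg0)]
    exact congrArg ENNReal.ofReal hg1 |>.trans ENNReal.ofReal_one
  | prod m c ih =>
    exact IsDensityOn.finset_prod (fun i _ j _ hij => ht.2.2 i j hij) fun i _ => ih i (ht.2.1 i)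
  | sum m w c ih =>
    have hc : ∀ i ∈ Finset.univ, IsDensityOn (fun _ => ν) (sum m w c).scope (c i).density :=
      fun i _ => ht.scope_eq_of_sum i ▸ ih i (ht.2.1 i)
    exact IsDensityOn.finset_sum (fun i _ => ht.2.2.2.1 i) ht.2.2.2.2 hc

lemma lmarginal_abs_density_sub_le_of_leaf {d : ℕ} {emb : Fin d ↪ Fin n}
    {g g' : (Fin d → X) → ℝ} {ε : ℝ} (hg : (leaf d emb g).WF ν) (hg' : (leaf d emb g').WF ν)
    (hε : leafTV ν ⟨d, emb, g⟩ ⟨d, emb, g'⟩ ≤ ε) (x : Fin n → X) :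
    (∫⋯∫⁻_(leaf d emb g).scope, (fun x => ENNReal.ofReal
      |(leaf d emb g).density x - (leaf d emb g').density x|) ∂fun _ => ν) x
      ≤ 2 * (leaf d emb g).scope.card * ENNReal.ofReal ε := by
  obtain ⟨-, hgm, hg1⟩ := hg
  obtain ⟨-, hgm', hg1'⟩ := hg'
  refine (lmarginal_map_comp_eq_lintegral (μ := fun _ => ν)
    (f := fun y => ENNReal.ofReal |g y - g' y|) emb (hgm.sub hgm').abs.ennreal_ofReal x).trans_le ?_
  rcases Nat.eq_zero_or_pos d with rfl | hd
  · simp [eq_one_of_integral_pi_eq_one_of_isEmpty hg1, eq_one_of_integral_pi_eq_one_of_isEmpty hg1']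
  have hint : Integrable (fun y => |g y - g' y|) (Measure.pi fun _ : Fin d => ν) :=
    ((Integrable.of_integral_ne_zero (hg1 ▸ one_ne_zero)).sub
      (Integrable.of_integral_ne_zero (hg1' ▸ one_ne_zero))).abs
  have hL1 : ∫ y, |g y - g' y| ∂(Measure.pi fun _ : Fin d => ν) ≤ 2 * ε := by
    simp only [leafTV, dif_pos, Fin.cast_refl, id] at hε
    linarith
  have hcard : (1 : ℝ≥0∞) ≤ (leaf d emb g).scope.card := by
    simpa [scope, Nat.one_le_iff_ne_zero] using hd.ne'
  calc ∫⁻ y, ENNReal.ofReal |g y - g' y| ∂Measure.pi ((fun _ => ν) ∘' emb)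
      = ENNReal.ofReal (∫ y, |g y - g' y| ∂(Measure.pi fun _ : Fin d => ν)) :=
        (ofReal_integral_eq_lintegral_ofReal hint (ae_of_all _ fun _ => abs_nonneg _)).symm
    _ ≤ ENNReal.ofReal (2 * ε) := ENNReal.ofReal_le_ofReal hL1
    _ = 2 * 1 * ENNReal.ofReal ε := by rw [ENNReal.ofReal_mul zero_le_two]; simp
    _ ≤ _ := by gcongr

lemma lmarginal_abs_density_sub_le_of_prod {m : ℕ} {c c' : Fin m → SPN n X}
    (hs : ∀ i, (c' i).scope = (c i).scope) (ht : (prod m c).WF ν) (ht' : (prod m c').WF ν)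
    {E A : ℝ≥0∞} (hc : ∀ i x, (∫⋯∫⁻_(c i).scope, (fun x => ENNReal.ofReal
      |(c i).density x - (c' i).density x|) ∂fun _ => ν) x
        ≤ 2 * (c i).scope.card * E + (c i).numWeights * A)
    (x : Fin n → X) :
    (∫⋯∫⁻_(prod m c).scope, (fun x => ENNReal.ofReal
      |(prod m c).density x - (prod m c').density x|) ∂fun _ => ν) x
      ≤ 2 * (prod m c).scope.card * E + (prod m c).numWeights * A := by
  have hdisj : ((Finset.univ : Finset (Fin m)) : Set (Fin m)).PairwiseDisjoint
      fun i => (c i).scope := fun i _ j _ hij => ht.2.2 i j hij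
  have hcard : (prod m c).scope.card = ∑ i, (c i).scope.card := Finset.card_biUnion hdisj
  refine (IsDensityOn.lmarginal_abs_prod_sub_prod_le Finset.univ hdisj
    (fun i _ => (ht.2.1 i).isDensityOn)
    (fun i _ => hs i ▸ (ht'.2.1 i).isDensityOn) x).trans ?_
  refine (Finset.sum_le_sum fun i _ => hc i x).trans_eq ?_
  simp only [hcard, numWeights, Nat.cast_sum, Finset.sum_add_distrib, Finset.mul_sum,
    Finset.sum_mul]

lemma lmarginal_abs_density_sub_le_of_sum {m : ℕ} {w w' : Fin m → ℝ} {c c' : Fin m → SPN n X}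
    (hs : ∀ i, (c' i).scope = (c i).scope) (ht : (sum m w c).WF ν) (ht' : (sum m w' c').WF ν)
    {α : ℝ} (hw : ∀ i, |w' i - w i| ≤ α)
    {E : ℝ≥0∞} (hc : ∀ i x, (∫⋯∫⁻_(c i).scope, (fun x => ENNReal.ofReal
      |(c i).density x - (c' i).density x|) ∂fun _ => ν) x
        ≤ 2 * (c i).scope.card * E + (c i).numWeights * ENNReal.ofReal α)
    (x : Fin n → X) :
    (∫⋯∫⁻_(sum m w c).scope, (fun x => ENNReal.ofReal
      |(sum m w c).density x - (sum m w' c').density x|) ∂fun _ => ν) x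
      ≤ 2 * (sum m w c).scope.card * E + (sum m w c).numWeights * ENNReal.ofReal α := by
  have hscope := ht.scope_eq_of_sum
  obtain ⟨-, hwf, -, hw0, hw1⟩ := ht
  set C := 2 * ((sum m w c).scope.card : ℝ≥0∞) * E
  have hw_le : ∀ i, ENNReal.ofReal (w i) ≤ 1 := fun i => ENNReal.ofReal_le_one.mpr
    (hw1 ▸ Finset.single_le_sum (fun j _ => hw0 j) (Finset.mem_univ i))
  refine (IsDensityOn.lmarginal_abs_sum_sub_sum_le Finset.univ (fun i _ => hw0 i)
    (fun i _ => hscope i ▸ (hwf i).isDensityOn)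
    (fun i _ => (hs i).trans (hscope i) ▸ (ht'.2.1 i).isDensityOn) x).trans ?_
  calc ∑ i, (ENNReal.ofReal (w i) * (∫⋯∫⁻_(sum m w c).scope, (fun x => ENNReal.ofReal
          |(c i).density x - (c' i).density x|) ∂fun _ => ν) x + ENNReal.ofReal |w i - w' i|)
      ≤ ∑ i, (ENNReal.ofReal (w i) * C + ((c i).numWeights * ENNReal.ofReal α
          + ENNReal.ofReal α)) := Finset.sum_le_sum fun i _ => by
        have hci := hc i x
        rw [hscope i] at hci
        rw [abs_sub_comm]
        calc _ ≤ ENNReal.ofReal (w i) * (C + (c i).numWeights * ENNReal.ofReal α)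
              + ENNReal.ofReal α := by gcongr; exact hw i
          _ ≤ _ := by
            rw [mul_add, add_assoc]
            exact add_le_add le_rfl
              (add_le_add (mul_le_of_le_one_left (by positivity) (hw_le i)) le_rfl)
    _ = C + (sum m w c).numWeights * ENNReal.ofReal α := by
        rw [Finset.sum_add_distrib, ← Finset.sum_mul,
          ← ENNReal.ofReal_sum_of_nonneg fun i _ => hw0 i, hw1, ENNReal.ofReal_one, one_mul,
          Finset.sum_add_distrib, ← Finset.sum_mul, Finset.sum_const, Finset.card_univ,
          Fintype.card_fin, nsmul_eq_mul]
        simp only [numWeights]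
        push_cast
        ring

theorem SameStruct.lmarginal_abs_density_sub_le {ε α : ℝ} {t t' : SPN n X}
    (h : SameStruct t t') (ht : t.WF ν) (ht' : t'.WF ν)
    (hL : ∀ p ∈ t.leaves.zip t'.leaves, leafTV ν p.1 p.2 ≤ ε)
    (hW : ∀ p ∈ t.weightsList.zip t'.weightsList, |p.2 - p.1| ≤ α) (x : Fin n → X) :
    (∫⋯∫⁻_t.scope, (fun x => ENNReal.ofReal |t.density x - t'.density x|) ∂fun _ => ν) x
      ≤ 2 * t.scope.card * ENNReal.ofReal ε + t.numWeights * ENNReal.ofReal α := by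
  induction h generalizing x with
  | leaf d emb g g' =>
    simpa [numWeights] using
      lmarginal_abs_density_sub_le_of_leaf ht ht'
        (hL (⟨d, emb, g⟩, ⟨d, emb, g'⟩) (List.mem_singleton_self _)) x
  | prod m c c' hc ih =>
    have hL' := fun i p hp =>
      hL p (List.mem_zip_flatten_ofFn (fun i => (hc i).length_leaves.symm) (i := i) hp)
    have hW' := fun i p hp =>
      hW p (List.mem_zip_flatten_ofFn (fun i => (hc i).length_weightsList.symm) (i := i) hp)
    exact lmarginal_abs_density_sub_le_of_prod (fun i => (hc i).scope_eq) ht ht'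
      (fun i => ih i (ht.2.1 i) (ht'.2.1 i) (hL' i) (hW' i)) x
  | sum m w w' c c' hc ih =>
    have hzip : (SPN.sum m w c).weightsList.zip (SPN.sum m w' c').weightsList
        = (List.ofFn w).zip (List.ofFn w') ++ (List.ofFn fun i => (c i).weightsList).flatten.zip
          (List.ofFn fun i => (c' i).weightsList).flatten :=
      List.zip_append (by simp)
    have hL' := fun i p hp =>
      hL p (List.mem_zip_flatten_ofFn (fun i => (hc i).length_leaves.symm) (i := i) hp)
    have hW' := fun i p hp => hW p <| hzip ▸ List.mem_append_right _
      (List.mem_zip_flatten_ofFn (fun i => (hc i).length_weightsList.symm) (i := i) hp)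
    have hw : ∀ i, |w' i - w i| ≤ α := fun i =>
      hW _ <| hzip ▸ List.mem_append_left _ (List.mem_zip_ofFn w w' i)
    exact lmarginal_abs_density_sub_le_of_sum (fun i => (hc i).scope_eq) ht ht' hw
      (fun i => ih i (ht.2.1 i) (ht'.2.1 i) (hL' i) (hW' i)) x

end SPN

/-- Let `f` and `fh` be probability densities represented by two
tree-structured SPNs over an `n`-dimensional product domain that have the same structure,
with `k` mixing weights in total.  If `ε, α ∈ [0,1]`, every pair of corresponding leaves is
`ε`-close in total variation distance and every pair of corresponding mixing weights differs
by at most `α`, then `TV(f, f̂) ≤ n ε + k α / 2`. -/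
theorem stmt4 {n : ℕ} {X : Type} [MeasurableSpace X] (ν : Measure X) [SigmaFinite ν]
    (f fh : SPN n X) (hf : f.WF ν) (hfh : fh.WF ν)
    (hscope : f.scope = Finset.univ) (hstruct : SPN.SameStruct f fh)
    (k : ℕ) (hk : f.numWeights = k)
    (ε α : ℝ) (hε : ε ∈ Set.Icc (0:ℝ) 1) (hα : α ∈ Set.Icc (0:ℝ) 1)
    (hleaf : ∀ i, i < f.leaves.length → SPN.leafTV ν (f.leaves[i]!) (fh.leaves[i]!) ≤ ε)
    (hw : ∀ j, j < f.weightsList.length →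
      |fh.weightsList[j]! - f.weightsList[j]!| ≤ α) :
    SPN.tv ν f.density fh.density ≤ n * ε + k * α / 2 := by
  have hmarg := hstruct.lmarginal_abs_density_sub_le hf hfh
    (List.forall_mem_zip_of_forall_getElem! (P := fun a b => SPN.leafTV ν a b ≤ ε) hleaf)
    (List.forall_mem_zip_of_forall_getElem! (P := fun a b => |b - a| ≤ α) hw)
  rw [hscope, hk, Finset.card_univ, Fintype.card_fin] at hmarg
  have hbound : 2 * (n : ℝ≥0∞) * ENNReal.ofReal ε + k * ENNReal.ofReal α
      = ENNReal.ofReal (2 * (n * ε + k * α / 2)) := by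
    rw [show 2 * (n * ε + k * α / 2) = ((2 * n : ℕ) : ℝ) * ε + (k : ℝ) * α by push_cast; ring,
      ENNReal.ofReal_add (by positivity [hε.1]) (by positivity [hα.1]),
      ENNReal.ofReal_mul (by positivity), ENNReal.ofReal_mul (by positivity),
      ENNReal.ofReal_natCast, ENNReal.ofReal_natCast, Nat.cast_mul, Nat.cast_ofNat]
  have hL1 : ∫⁻ x, ENNReal.ofReal |f.density x - fh.density x| ∂Measure.pi (fun _ => ν)
      ≤ ENNReal.ofReal (2 * (n * ε + k * α / 2)) :=
    hbound ▸ lintegral_le_of_forall_lmarginal_univ_le hmarg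
  rw [SPN.tv, integral_eq_lintegral_of_nonneg_ae (f := fun x => |f.density x - fh.density x|)
    (ae_of_all _ fun _ => abs_nonneg _)
    (hf.isDensityOn.measurable.sub hfh.isDensityOn.measurable).abs.aestronglyMeasurable]
  have hintegral := ENNReal.toReal_le_of_le_ofReal (by positivity [hε.1, hα.1]) hL1
  linarith
end

section
/- Let e ≥ 1 and m ≥ 1 be integers, ε ∈ (0,1), and let p = (p₁,…,p_e) be a probability distribution on {1,…,e} with pᵢ ≥ ε/(3e) for every i. Draw N i.i.d. samples from p, where N ≥ 48·m·e·log(6e)/ε. Then with probability at least 5/6, for every i ∈ {1,…,e} the number of samples equal to i is at least m·log(6e). -/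
open MeasureTheory
open scoped ENNReal

private lemma sum_biUnion_le_aux {α ι : Type*} [DecidableEq α] (f : α → ℝ)
    (hf : ∀ x, 0 ≤ f x) (s : Finset ι) (B : ι → Finset α) :
    ∑ x ∈ s.biUnion B, f x ≤ ∑ i ∈ s, ∑ x ∈ B i, f x := by
  classical
  induction s using Finset.induction_on with
  | empty => simp
  | @insert a s ha ih =>
    rw [Finset.biUnion_insert, Finset.sum_insert ha]
    calc ∑ x ∈ B a ∪ s.biUnion B, f x
        ≤ ∑ x ∈ B a, f x + ∑ x ∈ s.biUnion B, f x := by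
          have h := Finset.sum_union_inter (s₁ := B a) (s₂ := s.biUnion B) (f := f)
          have h2 : 0 ≤ ∑ x ∈ B a ∩ s.biUnion B, f x :=
            Finset.sum_nonneg fun x _ => hf x
          linarith
      _ ≤ ∑ x ∈ B a, f x + ∑ i ∈ s, ∑ x ∈ B i, f x := by linarith

set_option maxHeartbeats 1000000 in
/-- Let `e, m ≥ 1` be integers, `ε ∈ (0,1)`, and `p` a probability
distribution on `{1,…,e}` with `pᵢ ≥ ε/(3e)` for every `i`.  Draw `N ≥ 48·m·e·log(6e)/ε`
i.i.d. samples from `p` (the joint distribution has density `S ↦ ∏ⱼ p(Sⱼ)` with respect to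
the counting measure on the sample space).  Then with probability at least `5/6`, every
category `i` receives at least `m·log(6e)` samples. -/
theorem stmt15 (e m : ℕ) (he : 1 ≤ e) (hm : 1 ≤ m) (ε : ℝ) (hε : ε ∈ Set.Ioo (0:ℝ) 1)
    (p : Fin e → ℝ) (hp0 : ∀ i, 0 ≤ p i) (hp1 : ∑ i, p i = 1)
    (hplb : ∀ i, ε / (3 * e) ≤ p i)
    (N : ℕ) (hN : 48 * (m : ℝ) * e * Real.log (6 * e) / ε ≤ N) :
    (5/6 : ℝ≥0∞) ≤
      ((Measure.count : Measure (Fin N → Fin e)).withDensity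
          fun S => ENNReal.ofReal (∏ j, p (S j)))
        {S | ∀ i : Fin e, (m : ℝ) * Real.log (6 * e) ≤
          ((Finset.univ.filter fun j => S j = i).card : ℝ)} := by
  classical
  -- basic real facts
  have hε0 : (0:ℝ) < ε := hε.1
  have he1 : (1:ℝ) ≤ (e:ℝ) := by exact_mod_cast he
  have hL : (0:ℝ) < Real.log (6 * e) := by
    apply Real.log_pos; nlinarith
  set L : ℝ := Real.log (6 * e) with hLdef
  set t : ℝ := (m:ℝ) * L with htdef
  have hm1 : (1:ℝ) ≤ (m:ℝ) := by exact_mod_cast hm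
  have ht0 : 0 < t := by positivity
  set w : (Fin N → Fin e) → ℝ := fun S => ∏ j, p (S j) with hwdef
  have hw0 : ∀ S, 0 ≤ w S := fun S => Finset.prod_nonneg fun j _ => hp0 _
  set G : Set (Fin N → Fin e) :=
    {S | ∀ i : Fin e, t ≤ ((Finset.univ.filter fun j => S j = i).card : ℝ)} with hGdef
  have hmeas : MeasurableSet G := (Set.to_countable G).measurableSet
  -- compute the measure as a finite sum
  have hmeq :
      ((Measure.count : Measure (Fin N → Fin e)).withDensity
          fun S => ENNReal.ofReal (w S)) G
        = ∑ S ∈ Finset.univ.filter (· ∈ G), ENNReal.ofReal (w S) := by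
    rw [withDensity_apply _ hmeas, ← lintegral_indicator hmeas, lintegral_count,
      tsum_fintype]
    rw [Finset.sum_filter]
    congr 1; ext S
    by_cases h : S ∈ G <;> simp [Set.indicator, h]
  rw [show (fun S : Fin N → Fin e => ENNReal.ofReal (∏ j, p (S j)))
      = fun S => ENNReal.ofReal (w S) from rfl, hmeq]
  rw [← ENNReal.ofReal_sum_of_nonneg (fun S _ => hw0 S)]
  have h56 : (5/6 : ℝ≥0∞) = ENNReal.ofReal (5/6 : ℝ) := by
    rw [ENNReal.ofReal_div_of_pos (by norm_num)]
    norm_num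
  rw [h56]
  apply ENNReal.ofReal_le_ofReal
  -- now a purely real inequality
  -- total mass is 1
  have htot : ∑ S : Fin N → Fin e, w S = 1 := by
    have h := Finset.prod_univ_sum (fun _ : Fin N => (Finset.univ : Finset (Fin e)))
      (fun _ a => p a)
    rw [Fintype.piFinset_univ] at h
    simp only [hwdef]
    rw [← h, hp1, Finset.prod_const_one]
  -- split into good and bad
  have hsplit := Finset.sum_filter_add_sum_filter_not Finset.univ (· ∈ G) w
  rw [htot] at hsplit
  -- bad set bound
  set B : Fin e → Finset (Fin N → Fin e) := fun i =>
    Finset.univ.filter fun S => ((Finset.univ.filter fun j => S j = i).card : ℝ) < t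
    with hBdef
  have hbadsub : Finset.univ.filter (· ∉ G) ⊆ Finset.univ.biUnion B := by
    intro S hS
    simp only [Finset.mem_filter, Finset.mem_univ, true_and, hGdef, Set.mem_setOf_eq,
      not_forall] at hS
    obtain ⟨i, hi⟩ := hS
    simp only [Finset.mem_biUnion, Finset.mem_univ, true_and, hBdef, Finset.mem_filter]
    push_neg at hi
    exact ⟨i, hi⟩
  -- per-category Chernoff bound
  have hNp : ∀ i : Fin e, 16 * t ≤ (N:ℝ) * p i := by
    intro i
    have h1 : ε / (3 * e) ≤ p i := hplb i
    have h2 : 48 * (m:ℝ) * e * L / ε ≤ N := hN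
    have he0 : (0:ℝ) < e := by linarith
    calc 16 * t = (48 * (m:ℝ) * e * L / ε) * (ε / (3 * e)) := by
          field_simp; ring
      _ ≤ (N:ℝ) * (ε / (3*e)) := by
          apply mul_le_mul_of_nonneg_right h2; positivity
      _ ≤ (N:ℝ) * p i := by
          apply mul_le_mul_of_nonneg_left h1 (Nat.cast_nonneg N)
  have hpi1 : ∀ i : Fin e, p i ≤ 1 := by
    intro i
    rw [← hp1]
    exact Finset.single_le_sum (fun j _ => hp0 j) (Finset.mem_univ i)
  have hE : Real.exp (-1) ≤ 3/8 := by
    rw [Real.exp_neg]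
    rw [inv_le_iff_one_le_mul₀ (Real.exp_pos 1)]
    nlinarith [Real.exp_one_gt_d9]
  have hkey : ∀ i : Fin e, ∑ S ∈ B i, w S ≤ Real.exp (-(9*t)) := by
    intro i
    set c : (Fin N → Fin e) → ℕ := fun S => (Finset.univ.filter fun j => S j = i).card
      with hcdef
    set g : Fin e → ℝ := fun a => p a * (if a = i then Real.exp (-1) else 1) with hgdef
    have hg0 : ∀ a, 0 ≤ g a := fun a => by
      apply mul_nonneg (hp0 a); split <;> positivity
    have step1 : ∀ S, Real.exp (-(c S : ℝ)) * w S = ∏ j, g (S j) := by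
      intro S
      have hprod : (∏ j, (if S j = i then Real.exp (-1) else 1))
          = Real.exp (-(c S : ℝ)) := by
        rw [Finset.prod_ite, Finset.prod_const, Finset.prod_const_one, mul_one]
        rw [show (-(c S : ℝ)) = (c S : ℕ) * (-1 : ℝ) by push_cast; ring, Real.exp_nat_mul]
      simp only [hgdef]
      rw [Finset.prod_mul_distrib, hprod]
      ring
    have step2 : ∑ S ∈ B i, w S
        ≤ Real.exp t * ∑ S : Fin N → Fin e, Real.exp (-(c S:ℝ)) * w S := by
      calc ∑ S ∈ B i, w S ≤ ∑ S ∈ B i, Real.exp (t - (c S:ℝ)) * w S := by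
            apply Finset.sum_le_sum
            intro S hS
            have hc : (c S : ℝ) < t := by
              simpa [hBdef, hcdef] using hS
            nlinarith [Real.one_le_exp (by linarith : (0:ℝ) ≤ t - (c S:ℝ)), hw0 S]
        _ ≤ ∑ S : Fin N → Fin e, Real.exp (t - (c S:ℝ)) * w S :=
            Finset.sum_le_sum_of_subset_of_nonneg (Finset.subset_univ _)
              (fun S _ _ => mul_nonneg (Real.exp_nonneg _) (hw0 S))
        _ = Real.exp t * ∑ S : Fin N → Fin e, Real.exp (-(c S:ℝ)) * w S := by
            rw [Finset.mul_sum]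
            apply Finset.sum_congr rfl
            intro S _
            rw [← mul_assoc, ← Real.exp_add]
            ring_nf
    have step3 : ∑ S : Fin N → Fin e, (∏ j, g (S j)) = (∑ a, g a) ^ N := by
      have h := Finset.prod_univ_sum (fun _ : Fin N => (Finset.univ : Finset (Fin e)))
        (fun _ a => g a)
      rw [Fintype.piFinset_univ] at h
      rw [← h, Finset.prod_const, Finset.card_univ, Fintype.card_fin]
    have step4 : ∑ a, g a = 1 - p i * (1 - Real.exp (-1)) := by
      have : ∀ a, g a = p a - (if a = i then p i * (1 - Real.exp (-1)) else 0) := by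
        intro a
        by_cases h : a = i <;> simp [hgdef, h] <;> ring
      rw [Finset.sum_congr rfl fun a _ => this a, Finset.sum_sub_distrib, hp1,
        Finset.sum_ite_eq' Finset.univ i]
      simp
    have hbase0 : 0 ≤ 1 - p i * (1 - Real.exp (-1)) := by
      nlinarith [hpi1 i, hp0 i, Real.exp_pos (-1), hE]
    have step5 : (1 - p i * (1 - Real.exp (-1))) ^ N
        ≤ Real.exp (-((N:ℝ) * (p i * (1 - Real.exp (-1))))) := by
      have h1 : 1 - p i * (1 - Real.exp (-1)) ≤ Real.exp (-(p i * (1 - Real.exp (-1)))) := by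
        nlinarith [Real.add_one_le_exp (-(p i * (1 - Real.exp (-1))))]
      calc (1 - p i * (1 - Real.exp (-1))) ^ N
          ≤ Real.exp (-(p i * (1 - Real.exp (-1)))) ^ N :=
            pow_le_pow_left₀ hbase0 h1 N
        _ = Real.exp (-((N:ℝ) * (p i * (1 - Real.exp (-1))))) := by
            rw [← Real.exp_nat_mul]; ring_nf
    have step6 : Real.exp t * Real.exp (-((N:ℝ) * (p i * (1 - Real.exp (-1)))))
        ≤ Real.exp (-(9*t)) := by
      rw [← Real.exp_add]
      apply Real.exp_le_exp.mpr
      have h16 : 16 * t ≤ (N:ℝ) * p i := hNp i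
      have hfac : (10:ℝ) ≤ 16 * (1 - Real.exp (-1)) := by nlinarith
      have : 16 * t * (1 - Real.exp (-1)) ≤ (N:ℝ) * (p i * (1 - Real.exp (-1))) := by
        rw [show (N:ℝ) * (p i * (1 - Real.exp (-1))) = ((N:ℝ) * p i) * (1 - Real.exp (-1)) by ring]
        apply mul_le_mul_of_nonneg_right h16
        nlinarith
      nlinarith
    calc ∑ S ∈ B i, w S
        ≤ Real.exp t * ∑ S : Fin N → Fin e, Real.exp (-(c S:ℝ)) * w S := step2
      _ = Real.exp t * ∑ S : Fin N → Fin e, ∏ j, g (S j) := by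
          rw [Finset.sum_congr rfl fun S _ => step1 S]
      _ = Real.exp t * (∑ a, g a) ^ N := by rw [step3]
      _ = Real.exp t * (1 - p i * (1 - Real.exp (-1))) ^ N := by rw [step4]
      _ ≤ Real.exp t * Real.exp (-((N:ℝ) * (p i * (1 - Real.exp (-1))))) :=
          mul_le_mul_of_nonneg_left step5 (Real.exp_nonneg _)
      _ ≤ Real.exp (-(9*t)) := step6
  -- combine
  have hbad : ∑ S ∈ Finset.univ.filter (· ∉ G), w S ≤ 1/6 := by
    calc ∑ S ∈ Finset.univ.filter (· ∉ G), w S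
        ≤ ∑ S ∈ Finset.univ.biUnion B, w S :=
          Finset.sum_le_sum_of_subset_of_nonneg hbadsub fun S _ _ => hw0 S
      _ ≤ ∑ i : Fin e, ∑ S ∈ B i, w S := sum_biUnion_le_aux w hw0 _ _
      _ ≤ ∑ i : Fin e, Real.exp (-(9*t)) := Finset.sum_le_sum fun i _ => hkey i
      _ = (e:ℝ) * Real.exp (-(9*t)) := by
          rw [Finset.sum_const, Finset.card_univ, Fintype.card_fin, nsmul_eq_mul]
      _ ≤ 1/6 := by
          have h9 : L ≤ 9 * t := by nlinarith
          have hmono : Real.exp (-(9*t)) ≤ Real.exp (-L) := by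
            apply Real.exp_le_exp.mpr; linarith
          have hexpL : Real.exp (-L) = (6 * (e:ℝ))⁻¹ := by
            rw [Real.exp_neg, hLdef, Real.exp_log (by positivity)]
          have he0 : (0:ℝ) < e := by linarith
          have hid : (e:ℝ) * (6 * (e:ℝ))⁻¹ = 1/6 := by field_simp
          calc (e:ℝ) * Real.exp (-(9*t)) ≤ (e:ℝ) * Real.exp (-L) :=
                mul_le_mul_of_nonneg_left hmono (by positivity)
            _ = 1/6 := by rw [hexpL, hid]
  linarith
end

section
/- Let e ≥ 1 and m ≥ 1 be integers, ε ∈ (0,1), and let X be a binomial random variable with N trials and success probability p, where p ≥ ε/(3e) and N ≥ 48·m·e·log(6e)/ε. Then P(X < m·log(6e)) ≤ 1/(6e). -/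
open MeasureTheory
open scoped ENNReal

private lemma aux_prod_ite_pow {N : ℕ} (a b : ℝ) (S : Fin N → Bool) :
    (∏ j, if S j then a else b) = a ^ ((Finset.univ.filter fun j => S j = true).card)
      * b ^ (N - (Finset.univ.filter fun j => S j = true).card) := by
  rw [Finset.prod_ite, Finset.prod_const, Finset.prod_const]
  have h2 : (Finset.filter (fun j => S j = true) Finset.univ).card
      + (Finset.filter (fun j => ¬ S j = true) Finset.univ).card = N := by
    rw [Finset.card_filter_add_card_filter_not]; simp
  congr 2
  omega

private lemma aux_sum_prod_ite {N : ℕ} (a b : ℝ) :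
    ∑ S : Fin N → Bool, ∏ j, (if S j then a else b) = (a + b) ^ N := by
  rw [← Fintype.piFinset_univ,
    ← Finset.prod_univ_sum (t := fun _ => Finset.univ) (f := fun _ c => if c = true then a else b)]
  simp

open Classical in
private lemma aux_density_apply {N : ℕ} (f : (Fin N → Bool) → ℝ) (hf : ∀ S, 0 ≤ f S)
    (A : Set (Fin N → Bool)) :
    ((Measure.count : Measure (Fin N → Bool)).withDensity fun S => ENNReal.ofReal (f S)) A
      = ENNReal.ofReal (∑ S ∈ Finset.univ.filter (· ∈ A), f S) := by
  rw [MeasureTheory.withDensity_apply _ ((Set.to_countable A).measurableSet),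
      ← MeasureTheory.lintegral_indicator ((Set.to_countable A).measurableSet) _,
      MeasureTheory.lintegral_count, tsum_fintype,
      Finset.sum_indicator_eq_sum_filter, ENNReal.ofReal_sum_of_nonneg (fun S _ => hf S)]

/-- Let `e, m ≥ 1` be integers and `ε ∈ (0,1)`.  Let `X` be a binomial
random variable with `N` trials and success probability `p` — modelled as the number of
successes among `N` independent Bernoulli(`p`) trials, whose joint distribution has density
`S ↦ ∏ⱼ (if Sⱼ then p else 1−p)` with respect to the counting measure on `{0,1}^N`.  If
`p ≥ ε/(3e)` and `N ≥ 48·m·e·log(6e)/ε`, then `P(X < m·log(6e)) ≤ 1/(6e)`. -/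
theorem stmt16 (e m : ℕ) (he : 1 ≤ e) (hm : 1 ≤ m) (ε : ℝ) (hε : ε ∈ Set.Ioo (0:ℝ) 1)
    (p : ℝ) (hp1 : p ≤ 1) (hplb : ε / (3 * e) ≤ p)
    (N : ℕ) (hN : 48 * (m : ℝ) * e * Real.log (6 * e) / ε ≤ N) :
    ((Measure.count : Measure (Fin N → Bool)).withDensity
        fun S => ENNReal.ofReal (∏ j, if S j then p else 1 - p))
      {S | ((Finset.univ.filter fun j => S j = true).card : ℝ) <
        (m : ℝ) * Real.log (6 * e)} ≤ ENNReal.ofReal (1 / (6 * e)) := by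
  classical
  obtain ⟨hε0, hε1⟩ := hε
  have he' : (1:ℝ) ≤ (e:ℝ) := by exact_mod_cast he
  have hm' : (1:ℝ) ≤ (m:ℝ) := by exact_mod_cast hm
  set L := Real.log (6 * (e:ℝ)) with hLdef
  have h6e : (1:ℝ) < 6 * e := by nlinarith
  have hLpos : 0 < L := Real.log_pos h6e
  have hp0 : 0 < p := lt_of_lt_of_le (by positivity) hplb
  have hq0 : (0:ℝ) ≤ 1 - p := by linarith
  set t := (m:ℝ) * L with htdef
  have htL : L ≤ t := by nlinarith
  set k : (Fin N → Bool) → ℕ := fun S => (Finset.univ.filter fun j => S j = true).card with hk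
  set A : Set (Fin N → Bool) := {S | ((k S : ℝ)) < t} with hA
  have hw : ∀ S : Fin N → Bool, (0:ℝ) ≤ ∏ j, (if S j then p else 1 - p) := fun S =>
    Finset.prod_nonneg fun j _ => by split <;> linarith
  have hw' : ∀ S : Fin N → Bool, (0:ℝ) ≤ ∏ j, (if S j then p * Real.exp (-1) else 1 - p) :=
    fun S => Finset.prod_nonneg fun j _ => by
      split
      · positivity
      · linarith
  -- shifting identity
  have hshift : ∀ S : Fin N → Bool, (∏ j, if S j then p * Real.exp (-1) else 1 - p)
      = Real.exp (-(k S : ℝ)) * ∏ j, (if S j then p else 1 - p) := by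
    intro S
    rw [aux_prod_ite_pow, aux_prod_ite_pow, mul_pow, ← Real.exp_nat_mul,
      show ((k S : ℝ) * (-1)) = -(k S : ℝ) by ring]
    ring
  -- the real bound
  have hsum : ∑ S ∈ Finset.univ.filter (· ∈ A), (∏ j, if S j then p else 1 - p)
      ≤ 1 / (6 * (e:ℝ)) := by
    have step1 : ∑ S ∈ Finset.univ.filter (· ∈ A), (∏ j, if S j then p else 1 - p)
        ≤ ∑ S ∈ Finset.univ.filter (· ∈ A),
            Real.exp t * ∏ j, (if S j then p * Real.exp (-1) else 1 - p) := by
      apply Finset.sum_le_sum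
      intro S hS
      have hSA : (k S : ℝ) < t := (Finset.mem_filter.mp hS).2
      rw [hshift, ← mul_assoc, ← Real.exp_add]
      have h1 : (1:ℝ) ≤ Real.exp (t + -(k S : ℝ)) := Real.one_le_exp (by linarith)
      nlinarith [hw S]
    have step2 : ∑ S ∈ Finset.univ.filter (· ∈ A),
          Real.exp t * ∏ j, (if S j then p * Real.exp (-1) else 1 - p)
        ≤ Real.exp t * (p * Real.exp (-1) + (1 - p)) ^ N := by
      rw [← aux_sum_prod_ite, Finset.mul_sum]
      apply Finset.sum_le_sum_of_subset_of_nonneg (Finset.filter_subset _ _)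
      intro S _ _
      have := hw' S
      positivity
    have hhalf : Real.exp (-1 : ℝ) ≤ 1/2 := by
      rw [Real.exp_neg]
      have h2 : (2:ℝ) ≤ Real.exp 1 := by
        have := Real.add_one_le_exp (1:ℝ); linarith
      rw [inv_le_comm₀ (Real.exp_pos 1) (by norm_num : (0:ℝ) < 1/2)]
      norm_num
      linarith
    have hpN : 16 * t ≤ p * N := by
      have h1 : ε / (3 * e) * N ≤ p * N := by
        apply mul_le_mul_of_nonneg_right hplb (Nat.cast_nonneg N)
      have h2 : ε / (3 * e) * (48 * (m : ℝ) * e * L / ε) ≤ ε / (3 * e) * N := by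
        apply mul_le_mul_of_nonneg_left hN (by positivity)
      have h3 : ε / (3 * e) * (48 * (m : ℝ) * e * L / ε) = 16 * t := by
        rw [htdef]; field_simp; ring
      linarith
    have step3 : (p * Real.exp (-1) + (1 - p)) ^ N
        ≤ Real.exp (-(p * (1 - Real.exp (-1))) * N) := by
      rw [show (-(p * (1 - Real.exp (-1))) * (N:ℝ)) = (N:ℝ) * -(p * (1 - Real.exp (-1))) by ring,
        Real.exp_nat_mul]
      apply pow_le_pow_left₀ (by nlinarith [Real.exp_pos (-1:ℝ)])
      have := Real.add_one_le_exp (-(p * (1 - Real.exp (-1))))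
      linarith
    have step4 : Real.exp t * Real.exp (-(p * (1 - Real.exp (-1))) * N) ≤ 1 / (6 * (e:ℝ)) := by
      rw [← Real.exp_add]
      have hfin : t + -(p * (1 - Real.exp (-1))) * N ≤ -L := by
        have hX : 0 ≤ p * N * (1/2 - Real.exp (-1)) :=
          mul_nonneg (mul_nonneg hp0.le (Nat.cast_nonneg N)) (by linarith)
        nlinarith [hX, hpN, htL, hLpos]
      calc Real.exp (t + -(p * (1 - Real.exp (-1))) * N) ≤ Real.exp (-L) :=
            Real.exp_le_exp.mpr hfin
        _ = 1 / (6 * (e:ℝ)) := by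
            rw [Real.exp_neg, hLdef, Real.exp_log (by linarith)]
            ring
    calc ∑ S ∈ Finset.univ.filter (· ∈ A), (∏ j, if S j then p else 1 - p)
        ≤ Real.exp t * (p * Real.exp (-1) + (1 - p)) ^ N := le_trans step1 step2
      _ ≤ Real.exp t * Real.exp (-(p * (1 - Real.exp (-1))) * N) :=
          mul_le_mul_of_nonneg_left step3 (Real.exp_pos t).le
      _ ≤ 1 / (6 * (e:ℝ)) := step4
  rw [aux_density_apply _ hw]
  exact ENNReal.ofReal_le_ofReal hsum
end
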